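/- Let M be a matroid on a finite ground set V and let P_M ⊆ ℝ^V be the convex hull of the indicator vectors of the independent sets of M. Let G = (V, E) be a simple graph with nonnegative edge weights w_e ≥ 0 and π a distribution over subsets of V. Then for every x ∈ P_M there exists an independent set I of M with F^π(1_I) ≥ F^π(x), where 1_I is the indicator vector of I. -/

import Mathlib

/-!
The coefficient of `x_u x_v` in `F^π` is `w_e (q_u + q_v - q_{uv} - 1) ≤ 0`, while the partial
derivatives of `F^π` are nonnegative on `[0,1]^V`, so `F^π` is monotone on the cube. Since the
graph has no loops, `d_u d_v ≤ 0` on every edge for `d = e_i - e_j`, so `t ↦ F^π(x + t d)` is a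
quadratic with nonnegative leading coefficient, hence convex.

Write `x` as a convex combination of indicator vectors of independent sets and merge the terms
two at a time, `a 1_I + b 1_J ↦ (a + b) 1_K`. If `I ⊊ J`, enlarge `I` by monotonicity. Otherwise
symmetric exchange yields `i ∈ I \ J`, `j ∈ J \ I` with `I - i + j` and `J - j + i` independent;
the segment `x + [-a, b] (e_i - e_j)` has these two exchanges as endpoints, and by convexity one
of them does not decrease `F^π`. Every move shrinks `I ∆ J`.
-/

open Finset

/-- The marginal probability that `u` is interdicted under distribution `π`. -/
def marg {V : Type*} [Fintype V] [DecidableEq V] (π : Finset V → ℝ) (u : V) : ℝ :=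
  ∑ S ∈ univ.filter (fun S : Finset V => u ∈ S), π S

/-- The pairwise marginal probability that both `u` and `v` are interdicted under `π`. -/
def marg2 {V : Type*} [Fintype V] [DecidableEq V] (π : Finset V → ℝ) (u v : V) : ℝ :=
  ∑ S ∈ univ.filter (fun S : Finset V => u ∈ S ∧ v ∈ S), π S

/-- The auxiliary multilinear function `F^π(x)`. -/
def Ffun {V : Type*} [Fintype V] [DecidableEq V] (E : Finset (V × V)) (w : V × V → ℝ)
    (π : Finset V → ℝ) (x : V → ℝ) : ℝ :=
  ∑ e ∈ E,
    (x e.1 * (w e * (1 - marg π e.1)) + x e.2 * (w e * (1 - marg π e.2))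
      + x e.1 * x e.2 *
        (w e * (1 - marg2 π e.1 e.2) - w e * (1 - marg π e.1) - w e * (1 - marg π e.2)))

/-- The indicator vector of a finite vertex set. -/
def indVec {V : Type*} [DecidableEq V] (I : Finset V) : V → ℝ :=
  fun v => if v ∈ I then 1 else 0

/-- The matroid polytope: the convex hull of the indicator vectors of the independent sets. -/
def matroidPolytope {V : Type*} [Fintype V] [DecidableEq V] (M : Matroid V) : Set (V → ℝ) :=
  convexHull ℝ {y : V → ℝ | ∃ I : Finset V, M.Indep ↑I ∧ y = indVec I}


namespace Matroid

variable {α : Type*} {M : Matroid α} {I J : Set α}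

lemma Indep.exists_symm_exchange_of_mem_closure (hI : M.Indep I) (hJ : M.Indep J) {i : α}
    (hiI : i ∈ I) (hiJ : i ∉ J) (hicl : i ∈ M.closure J) :
    ∃ j ∈ J \ I, M.Indep (insert j (I \ {i})) ∧ M.Indep (insert i (J \ {j})) := by
  have hC := hJ.fundCircuit_isCircuit hicl hiJ
  obtain ⟨j, ⟨hjC, hji⟩, hjcl⟩ : ∃ j ∈ M.fundCircuit i J \ {i}, j ∉ M.closure (I \ {i}) := by
    by_contra! h
    exact hI.notMem_closure_sdiff_of_mem hiI <|
      M.closure_subset_closure_of_subset_closure h (hC.mem_closure_sdiff_singleton_of_mem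
        (M.mem_fundCircuit i J))
  have hjJ : j ∈ J :=
    (M.fundCircuit_subset_insert i J hjC).resolve_left hji
  have hjI : j ∉ I := fun hjI ↦ hjcl <|
    M.subset_closure _ (hI.subset Set.sdiff_subset).subset_ground ⟨hjI, hji⟩
  refine ⟨j, ⟨hjJ, hjI⟩, ?_, ?_⟩
  · exact (hI.subset Set.sdiff_subset).insert_indep_iff.2
      (Or.inl ⟨hJ.subset_ground hjJ, hjcl⟩)
  · rw [Set.insert_sdiff_singleton_comm (Ne.symm hji)]
    exact (hJ.mem_fundCircuit_iff hicl hiJ).1 hjC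

lemma Indep.exists_symm_exchange (hI : M.Indep I) (hJ : M.Indep J)
    (hIJ : (I \ J).Nonempty) (hJI : (J \ I).Nonempty) :
    ∃ i ∈ I \ J, ∃ j ∈ J \ I,
      M.Indep (insert j (I \ {i})) ∧ M.Indep (insert i (J \ {j})) := by
  by_cases hIcl : ∃ i ∈ I \ J, i ∈ M.closure J
  · obtain ⟨i, hi, hicl⟩ := hIcl
    obtain ⟨j, hj, h⟩ := hI.exists_symm_exchange_of_mem_closure hJ hi.1 hi.2 hicl
    exact ⟨i, hi, j, hj, h⟩
  by_cases hJcl : ∃ j ∈ J \ I, j ∈ M.closure I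
  · obtain ⟨j, hj, hjcl⟩ := hJcl
    obtain ⟨i, hi, h⟩ := hJ.exists_symm_exchange_of_mem_closure hI hj.1 hj.2 hjcl
    exact ⟨i, hi, j, hj, h.symm⟩
  push Not at hIcl hJcl
  obtain ⟨i, hi⟩ := hIJ
  obtain ⟨j, hj⟩ := hJI
  refine ⟨i, hi, j, hj, ?_, ?_⟩
  · exact (hI.subset Set.sdiff_subset).insert_indep_iff.2 <| Or.inl
      ⟨hJ.subset_ground hj.1, fun h ↦ hJcl j hj (M.closure_subset_closure Set.sdiff_subset h)⟩
  · exact (hJ.subset Set.sdiff_subset).insert_indep_iff.2 <| Or.inl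
      ⟨hI.subset_ground hi.1, fun h ↦ hIcl i hi (M.closure_subset_closure Set.sdiff_subset h)⟩

end Matroid

section Marginals

variable {V : Type*} [Fintype V] {π : Finset V → ℝ}

lemma sum_filter_le_one (hpos : ∀ S, 0 ≤ π S) (hsum : ∑ S : Finset V, π S = 1)
    (p : Finset V → Prop) [DecidablePred p] : ∑ S ∈ univ.filter p, π S ≤ 1 :=
  hsum ▸ Finset.sum_le_sum_of_subset_of_nonneg (Finset.filter_subset _ _) fun S _ _ => hpos S

variable [DecidableEq V]

lemma marg_le_one (hpos : ∀ S, 0 ≤ π S) (hsum : ∑ S : Finset V, π S = 1) (u : V) :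
    marg π u ≤ 1 :=
  sum_filter_le_one hpos hsum _

lemma marg2_le_marg_left (hpos : ∀ S, 0 ≤ π S) (u v : V) : marg2 π u v ≤ marg π u :=
  Finset.sum_le_sum_of_subset_of_nonneg (Finset.monotone_filter_right _ fun _ _ h => h.1)
    fun S _ _ => hpos S

lemma marg2_le_marg_right (hpos : ∀ S, 0 ≤ π S) (u v : V) : marg2 π u v ≤ marg π v :=
  Finset.sum_le_sum_of_subset_of_nonneg (Finset.monotone_filter_right _ fun _ _ h => h.2)
    fun S _ _ => hpos S

lemma marg_add_marg_sub_marg2_le_one (hpos : ∀ S, 0 ≤ π S) (hsum : ∑ S : Finset V, π S = 1)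
    (u v : V) : marg π u + marg π v - marg2 π u v ≤ 1 := by
  have hunion : marg π u + marg π v =
      ∑ S ∈ univ.filter (fun S : Finset V => u ∈ S ∨ v ∈ S), π S + marg2 π u v := by
    rw [marg, marg, marg2, Finset.filter_or, Finset.filter_and]
    exact Finset.sum_union_inter.symm
  linarith [sum_filter_le_one hpos hsum fun S : Finset V => u ∈ S ∨ v ∈ S]

end Marginals

def ConvexAlongExchanges {V : Type*} [DecidableEq V] (F : (V → ℝ) → ℝ) : Prop :=
  ∀ x i j, i ≠ j → ConvexOn ℝ Set.univ (fun t : ℝ => F (x + t • (Pi.single i 1 - Pi.single j 1)))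

section EdgePoly

variable {V : Type*} (E : Finset (V × V)) (a b c : V × V → ℝ)

def edgePoly (x : V → ℝ) : ℝ :=
  ∑ e ∈ E, (x e.1 * a e + x e.2 * b e + x e.1 * x e.2 * c e)

variable {E a b c}

lemma edgePoly_monotoneOn (ha : ∀ e ∈ E, 0 ≤ a e) (hb : ∀ e ∈ E, 0 ≤ b e)
    (hac : ∀ e ∈ E, 0 ≤ a e + c e) (hbc : ∀ e ∈ E, 0 ≤ b e + c e) :
    MonotoneOn (edgePoly E a b c) (Set.Icc 0 1) := by
  rintro x ⟨hx0, hx1⟩ y ⟨hy0, hy1⟩ hxy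
  refine Finset.sum_le_sum fun e he => ?_
  have hx0 := hx0 e.1; have hx1 := hx1 e.1; have hy0 := hy0 e.2; have hy1 := hy1 e.2
  simp only [Pi.zero_apply, Pi.one_apply] at hx0 hx1 hy0 hy1
  -- `a e + c e * s` interpolates between `a e` and `a e + c e` for `s ∈ [0, 1]`
  have h1 : 0 ≤ a e + c e * y e.2 := by nlinarith [ha e he, hac e he]
  have h2 : 0 ≤ b e + c e * x e.1 := by nlinarith [hb e he, hbc e he]
  linear_combination mul_nonneg (sub_nonneg.2 (hxy e.1)) h1 + mul_nonneg (sub_nonneg.2 (hxy e.2)) h2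

lemma convexOn_quadratic {α β γ : ℝ} (hα : 0 ≤ α) :
    ConvexOn ℝ Set.univ (fun t : ℝ => α * t ^ 2 + β * t + γ) := by
  refine ⟨convex_univ, fun s _ t _ p q hp hq hpq => ?_⟩
  obtain rfl : q = 1 - p := by linarith
  simp only [smul_eq_mul]
  nlinarith [mul_nonneg (mul_nonneg (mul_nonneg hα hp) hq) (sq_nonneg (s - t))]

lemma edgePoly_add_smul (x d : V → ℝ) (t : ℝ) :
    edgePoly E a b c (x + t • d) =
      (∑ e ∈ E, d e.1 * d e.2 * c e) * t ^ 2
        + (∑ e ∈ E, (d e.1 * (a e + x e.2 * c e) + d e.2 * (b e + x e.1 * c e))) * t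
        + edgePoly E a b c x := by
  simp only [edgePoly, Finset.sum_mul, ← Finset.sum_add_distrib, Pi.add_apply, Pi.smul_apply,
    smul_eq_mul]
  exact Finset.sum_congr rfl fun e _ => by ring

lemma edgePoly_convexOn_line {d : V → ℝ} (hd : ∀ e ∈ E, 0 ≤ d e.1 * d e.2 * c e)
    (x : V → ℝ) : ConvexOn ℝ Set.univ (fun t : ℝ => edgePoly E a b c (x + t • d)) := by
  simp only [edgePoly_add_smul]
  exact convexOn_quadratic (Finset.sum_nonneg hd)

lemma single_sub_single_mul_nonpos [DecidableEq V] {i j u v : V} (hij : i ≠ j) (huv : u ≠ v) :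
    (Pi.single i 1 - Pi.single j 1 : V → ℝ) u * (Pi.single i 1 - Pi.single j 1 : V → ℝ) v ≤ 0 := by
  simp only [Pi.sub_apply, Pi.single_apply]
  split_ifs <;> subst_vars <;> simp_all

lemma edgePoly_convexAlongExchanges [DecidableEq V] (hloop : ∀ e ∈ E, e.1 ≠ e.2)
    (hc : ∀ e ∈ E, c e ≤ 0) : ConvexAlongExchanges (edgePoly E a b c) := fun x _ _ hij =>
  edgePoly_convexOn_line (fun e he => mul_nonneg_of_nonpos_of_nonpos
    (single_sub_single_mul_nonpos hij (hloop e he)) (hc e he)) x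

end EdgePoly

section Ffun

variable {V : Type*} [Fintype V] [DecidableEq V] {E : Finset (V × V)} {w : V × V → ℝ}
  {π : Finset V → ℝ}

lemma Ffun_eq_edgePoly (E : Finset (V × V)) (w : V × V → ℝ) (π : Finset V → ℝ) :
    Ffun E w π = edgePoly E (fun e => w e * (1 - marg π e.1)) (fun e => w e * (1 - marg π e.2))
      (fun e => w e * (1 - marg2 π e.1 e.2) - w e * (1 - marg π e.1) - w e * (1 - marg π e.2)) :=
  rfl

lemma Ffun_monotoneOn (hw : ∀ e ∈ E, 0 ≤ w e) (hpos : ∀ S, 0 ≤ π S)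
    (hsum : ∑ S : Finset V, π S = 1) : MonotoneOn (Ffun E w π) (Set.Icc 0 1) := by
  rw [Ffun_eq_edgePoly]
  refine edgePoly_monotoneOn (fun e he => ?_) (fun e he => ?_) (fun e he => ?_) (fun e he => ?_)
  · exact mul_nonneg (hw e he) (sub_nonneg.2 (marg_le_one hpos hsum _))
  · exact mul_nonneg (hw e he) (sub_nonneg.2 (marg_le_one hpos hsum _))
  · linear_combination mul_nonneg (hw e he) (sub_nonneg.2 (marg2_le_marg_right hpos e.1 e.2))
  · linear_combination mul_nonneg (hw e he) (sub_nonneg.2 (marg2_le_marg_left hpos e.1 e.2))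

lemma Ffun_convexAlongExchanges (hw : ∀ e ∈ E, 0 ≤ w e) (hloop : ∀ e ∈ E, e.1 ≠ e.2)
    (hpos : ∀ S, 0 ≤ π S) (hsum : ∑ S : Finset V, π S = 1) :
    ConvexAlongExchanges (Ffun E w π) := by
  rw [Ffun_eq_edgePoly]
  refine edgePoly_convexAlongExchanges hloop fun e he => ?_
  linear_combination mul_nonneg (hw e he)
    (sub_nonneg.2 (marg_add_marg_sub_marg2_le_one hpos hsum e.1 e.2))

end Ffun

open scoped symmDiff

section IndVec

variable {V : Type*} [DecidableEq V]

lemma indVec_nonneg (I : Finset V) : 0 ≤ indVec I := fun v => by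
  unfold indVec; split_ifs <;> norm_num

lemma indVec_le_one (I : Finset V) : indVec I ≤ 1 := fun v => by
  unfold indVec; split_ifs <;> norm_num

lemma indVec_mono {I J : Finset V} (h : I ⊆ J) : indVec I ≤ indVec J := fun v => by
  unfold indVec; split_ifs with hI hJ <;> first | exact absurd (h hI) hJ | norm_num

lemma indVec_insert_erase {I : Finset V} {i j : V} (hi : i ∈ I) (hj : j ∉ I) :
    indVec (insert j (I.erase i)) = indVec I - (Pi.single i 1 - Pi.single j 1) := by
  funext v
  simp only [indVec, Pi.sub_apply, Pi.single_apply, Finset.mem_insert, Finset.mem_erase]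
  split_ifs <;> subst_vars <;> simp_all

lemma add_smul_indVec_mem_Icc {y : V → ℝ} {a b : ℝ} (hy : 0 ≤ y) (ha : 0 ≤ a) (hb : 0 ≤ b)
    (hyab : ∀ v, y v + (a + b) ≤ 1) (I J : Finset V) :
    y + a • indVec I + b • indVec J ∈ Set.Icc 0 1 := by
  refine ⟨fun v => ?_, fun v => ?_⟩ <;>
  · have := hy v; have := hyab v
    have := indVec_nonneg I v; have := indVec_le_one I v
    have := indVec_nonneg J v; have := indVec_le_one J v
    simp only [Pi.add_apply, Pi.smul_apply, smul_eq_mul, Pi.zero_apply, Pi.one_apply] at *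
    nlinarith

lemma card_symmDiff_insert_lt {I J : Finset V} {j : V} (hjJ : j ∈ J) (hjI : j ∉ I) :
    #(insert j I ∆ J) < #(I ∆ J) := by
  have h : insert j I ∆ J = (I ∆ J).erase j := by
    ext v
    simp only [Finset.mem_symmDiff, Finset.mem_insert, Finset.mem_erase]
    grind
  rw [h]
  exact Finset.card_erase_lt_of_mem (Finset.mem_symmDiff.2 (Or.inr ⟨hjJ, hjI⟩))

lemma card_symmDiff_erase_lt {I J : Finset V} {i : V} (hiI : i ∈ I) (hiJ : i ∉ J) :
    #(I.erase i ∆ J) < #(I ∆ J) := by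
  have h : I.erase i ∆ J = (I ∆ J).erase i := by
    ext v
    simp only [Finset.mem_symmDiff, Finset.mem_erase]
    grind
  rw [h]
  exact Finset.card_erase_lt_of_mem (Finset.mem_symmDiff.2 (Or.inl ⟨hiI, hiJ⟩))

end IndVec

section Rounding

variable {V : Type*} [DecidableEq V] {F : (V → ℝ) → ℝ} {M : Matroid V} {y : V → ℝ} {a b : ℝ}

lemma exists_grow_step (hmono : MonotoneOn F (Set.Icc 0 1)) (hy : 0 ≤ y) (ha : 0 ≤ a)
    (hb : 0 ≤ b) (hyab : ∀ v, y v + (a + b) ≤ 1) {I J : Finset V} (hJ : M.Indep ↑J)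
    (hIJ : I ⊂ J) :
    ∃ I' : Finset V, M.Indep ↑I' ∧ #(I' ∆ J) < #(I ∆ J) ∧
      F (y + a • indVec I + b • indVec J) ≤ F (y + a • indVec I' + b • indVec J) := by
  obtain ⟨j, hjJ, hjI⟩ := Finset.exists_of_ssubset hIJ
  refine ⟨insert j I, hJ.subset (by exact_mod_cast Finset.insert_subset hjJ hIJ.subset),
    card_symmDiff_insert_lt hjJ hjI, hmono (add_smul_indVec_mem_Icc hy ha hb hyab _ _)
      (add_smul_indVec_mem_Icc hy ha hb hyab _ _) ?_⟩
  gcongr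
  exact indVec_mono (Finset.subset_insert j I)

lemma exists_swap_step (hconv : ConvexAlongExchanges F) (ha : 0 ≤ a) (hb : 0 ≤ b)
    {I J : Finset V} (hI : M.Indep ↑I) (hJ : M.Indep ↑J)
    (hIJ : (I \ J).Nonempty) (hJI : (J \ I).Nonempty) :
    ∃ I' J' : Finset V, M.Indep ↑I' ∧ M.Indep ↑J' ∧ #(I' ∆ J') < #(I ∆ J) ∧
      F (y + a • indVec I + b • indVec J) ≤ F (y + a • indVec I' + b • indVec J') := by
  obtain ⟨i, ⟨hiI, hiJ⟩, j, ⟨hjJ, hjI⟩, hI', hJ'⟩ :=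
    hI.exists_symm_exchange hJ (by exact_mod_cast hIJ) (by exact_mod_cast hJI)
  rw [Finset.mem_coe] at hiI hiJ hjJ hjI
  have hij : i ≠ j := fun h => hiJ (h ▸ hjJ)
  set x := y + a • indVec I + b • indVec J
  have hmax := (hconv x i j hij).le_max_of_mem_Icc (Set.mem_univ (-a)) (Set.mem_univ b)
    ⟨neg_nonpos.2 ha, hb⟩
  rw [zero_smul, add_zero] at hmax
  rcases le_max_iff.1 hmax with hle | hle
  · refine ⟨insert j (I.erase i), J, by simpa using hI', hJ,
      (card_symmDiff_insert_lt hjJ (by simp [hij.symm, hjI])).trans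
        (card_symmDiff_erase_lt hiI hiJ),
      hle.trans_eq ?_⟩
    rw [indVec_insert_erase hiI hjI]
    congr 1
    module
  · refine ⟨I, insert i (J.erase j), hI, by simpa using hJ', ?_, hle.trans_eq ?_⟩
    · rw [symmDiff_comm, symmDiff_comm I J]
      exact (card_symmDiff_insert_lt hiI (by simp [hij, hiJ])).trans
        (card_symmDiff_erase_lt hjJ hjI)
    · rw [indVec_insert_erase hjJ hiJ]
      congr 1
      module

lemma exists_merge_step (hmono : MonotoneOn F (Set.Icc 0 1)) (hconv : ConvexAlongExchanges F)
    (hy : 0 ≤ y) (ha : 0 ≤ a) (hb : 0 ≤ b) (hyab : ∀ v, y v + (a + b) ≤ 1) {I J : Finset V}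
    (hI : M.Indep ↑I) (hJ : M.Indep ↑J) (hne : I ≠ J) :
    ∃ I' J' : Finset V, M.Indep ↑I' ∧ M.Indep ↑J' ∧ #(I' ∆ J') < #(I ∆ J) ∧
      F (y + a • indVec I + b • indVec J) ≤ F (y + a • indVec I' + b • indVec J') := by
  by_cases hIJ : I ⊆ J
  · obtain ⟨I', hI', hlt, hle⟩ :=
      exists_grow_step hmono hy ha hb hyab hJ (hIJ.ssubset_of_ne hne)
    exact ⟨I', J, hI', hJ, hlt, hle⟩
  by_cases hJI : J ⊆ I
  · obtain ⟨J', hJ', hlt, hle⟩ := exists_grow_step hmono hy hb ha (by simpa [add_comm] using hyab)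
      hI (hJI.ssubset_of_ne hne.symm)
    refine ⟨I, J', hI, hJ', by rwa [symmDiff_comm, symmDiff_comm I], ?_⟩
    simpa only [add_right_comm y] using hle
  exact exists_swap_step hconv ha hb hI hJ (Finset.sdiff_nonempty.2 hIJ)
    (Finset.sdiff_nonempty.2 hJI)

lemma exists_merge (hmono : MonotoneOn F (Set.Icc 0 1)) (hconv : ConvexAlongExchanges F)
    (hy : 0 ≤ y) (ha : 0 ≤ a) (hb : 0 ≤ b) (hyab : ∀ v, y v + (a + b) ≤ 1) {I J : Finset V}
    (hI : M.Indep ↑I) (hJ : M.Indep ↑J) :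
    ∃ K : Finset V, M.Indep ↑K ∧
      F (y + a • indVec I + b • indVec J) ≤ F (y + (a + b) • indVec K) := by
  induction hn : #(I ∆ J) using Nat.strong_induction_on generalizing I J with
  | _ n ih =>
    by_cases hIJ : I = J
    · subst hIJ
      exact ⟨I, hI, by rw [add_smul, add_assoc]⟩
    obtain ⟨I', J', hI', hJ', hlt, hle⟩ :=
      exists_merge_step hmono hconv hy ha hb hyab hI hJ hIJ
    obtain ⟨K, hK, hle'⟩ := ih _ (hn ▸ hlt) hI' hJ' rfl
    exact ⟨K, hK, hle.trans hle'⟩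

lemma exists_merge_sum (hmono : MonotoneOn F (Set.Icc 0 1)) (hconv : ConvexAlongExchanges F)
    {ι : Type*} (t : Finset ι) {c : ι → ℝ} {I : ι → Finset V} (hc : ∀ k ∈ t, 0 ≤ c k)
    (hI : ∀ k ∈ t, M.Indep ↑(I k)) (hy : 0 ≤ y) (hyt : ∀ v, y v + ∑ k ∈ t, c k ≤ 1) :
    ∃ K : Finset V, M.Indep ↑K ∧
      F (y + ∑ k ∈ t, c k • indVec (I k)) ≤ F (y + (∑ k ∈ t, c k) • indVec K) := by
  classical
  induction t using Finset.induction_on generalizing y with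
  | empty => exact ⟨∅, by simp, by simp⟩
  | insert k t hk ih =>
    rw [Finset.forall_mem_insert] at hc hI
    simp only [Finset.sum_insert hk] at hyt ⊢
    have hsum := Finset.sum_nonneg hc.2
    obtain ⟨K₀, hK₀, hle₀⟩ := ih hc.2 hI.2 (y := y + c k • indVec (I k))
      (add_nonneg hy (smul_nonneg hc.1 (indVec_nonneg _))) fun v => by
        have := mul_le_of_le_one_right hc.1 (indVec_le_one (I k) v)
        simp only [Pi.add_apply, Pi.smul_apply, smul_eq_mul]
        linarith [hyt v]
    obtain ⟨K, hK, hle⟩ := exists_merge hmono hconv hy hc.1 hsum hyt hI.1 hK₀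
    exact ⟨K, hK, by rw [← add_assoc]; exact hle₀.trans hle⟩

theorem exists_indep_le_of_mem_matroidPolytope [Fintype V] (hmono : MonotoneOn F (Set.Icc 0 1))
    (hconv : ConvexAlongExchanges F) {x : V → ℝ} (hx : x ∈ matroidPolytope M) :
    ∃ I : Finset V, M.Indep ↑I ∧ F x ≤ F (indVec I) := by
  rw [matroidPolytope, _root_.convexHull_eq] at hx
  obtain ⟨ι, t, c, z, hc, hc1, hz, rfl⟩ := hx
  choose! I hI hzI using hz
  obtain ⟨K, hK, hle⟩ := exists_merge_sum hmono hconv t hc hI le_rfl fun v => by simp [hc1]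
  refine ⟨K, hK, ?_⟩
  rw [Finset.centerMass_eq_of_sum_1 _ _ hc1, Finset.sum_congr rfl fun k hk => by rw [hzI k hk]]
  simpa [hc1] using hle

end Rounding

theorem pipage_rounding_general {V : Type*} [Fintype V] [DecidableEq V]
    (M : Matroid V)
    (E : Finset (V × V)) (w : V × V → ℝ) (hw : ∀ e ∈ E, 0 ≤ w e)
    (hloop : ∀ e ∈ E, e.1 ≠ e.2)
    (π : Finset V → ℝ) (hpos : ∀ S : Finset V, 0 ≤ π S)
    (hsum : ∑ S : Finset V, π S = 1)
    (x : V → ℝ) (hx : x ∈ matroidPolytope M) :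
    ∃ I : Finset V, M.Indep ↑I ∧ Ffun E w π x ≤ Ffun E w π (indVec I) :=
  exists_indep_le_of_mem_matroidPolytope (Ffun_monotoneOn hw hpos hsum)
    (Ffun_convexAlongExchanges hw hloop hpos hsum) hx

/-- Pipage rounding: every fractional point `x` of the matroid polytope can be rounded
to (the indicator vector of) an independent set `I` without decreasing `F^π`. -/
theorem pipage_rounding {V : Type*} [Fintype V] [DecidableEq V]
    (M : Matroid V) (hM : M.E = Set.univ)
    (E : Finset (V × V)) (w : V × V → ℝ) (hw : ∀ e ∈ E, 0 ≤ w e)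
    (hloop : ∀ e ∈ E, e.1 ≠ e.2) (hori : ∀ e ∈ E, (e.2, e.1) ∉ E)
    (π : Finset V → ℝ) (hpos : ∀ S : Finset V, 0 ≤ π S)
    (hsum : ∑ S : Finset V, π S = 1)
    (x : V → ℝ) (hx : x ∈ matroidPolytope M) :
    ∃ I : Finset V, M.Indep ↑I ∧ Ffun E w π x ≤ Ffun E w π (indVec I) :=
  pipage_rounding_general M E w hw hloop π hpos hsum x hx
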